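/- arXiv:2302.06710 — 3 statements merged into one kernel-verified Lean document; each statement's English description precedes it below -/
import Mathlib

section
/- (Bounding lemma.) Let X_{1:n} and X^ε_{1:n} be tuples in X^n differing in at most ⌊εn⌋ coordinates. Let m ∈ ℕ, let G_1,…,G_m be families of functions X → ℝ, and let t_1,…,t_m ∈ ℕ and M_1,…,M_m ≥ 0 be such that for each j ∈ [m], sup_{g∈G_j} Σ_{i=1}^n 1{|g(X_i)| > M_j} ≤ t_j. If φ satisfies (⌊εn⌋ + Σ_{j=1}^m t_j)/n ≤ φ < 1/2, then for any linear combination g = Σ_{j=1}^m a_j g_j with a_j ∈ ℝ and g_j ∈ G_j: |T̂_{n,φn}(g, X^ε_{1:n}) − Σ_{j=1}^m a_j·(1/n)Σ_{i=1}^n τ_{M_j}(g_j(X_i))| ≤ 6φ·Σ_{j=1}^m |a_j|·M_j. -/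
open MeasureTheory ProbabilityTheory Real Filter
open scoped BigOperators ENNReal NNReal Classical

noncomputable section

namespace Paper

variable {𝕏 : Type*} [MeasurableSpace 𝕏]

/-- The `k`-trimmed mean of `f` over the sample `x`. -/
def trimmedMean {n : ℕ} (k : ℕ) (f : 𝕏 → ℝ) (x : Fin n → 𝕏) : ℝ :=
  (∑ i ∈ Finset.univ.filter (fun i : Fin n => k ≤ (i : ℕ) ∧ (i : ℕ) < n - k),
    f (x (Tuple.sort (fun j => f (x j)) i))) / ((n - 2 * k : ℕ) : ℝ)

/-- Law of an i.i.d. sample of size `n` from `P`. -/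
def iidMeasure (n : ℕ) (P : Measure 𝕏) : Measure (Fin n → 𝕏) := Measure.pi fun _ => P

/-- Expected supremum of the empirical process. -/
def Emp (n : ℕ) (F : Set (𝕏 → ℝ)) (P : Measure 𝕏) : ℝ :=
  ∫ x : Fin n → 𝕏,
    sSup ((fun f : 𝕏 → ℝ => |(∑ i, f (x i)) / n - ∫ z, f z ∂P|) '' F) ∂(iidMeasure n P)

/-- Law of `n` i.i.d. uniform signs (encoded by booleans). -/
def signMeasure (n : ℕ) : Measure (Fin n → Bool) :=
  Measure.pi fun _ => (PMF.uniformOfFintype Bool).toMeasure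

/-- Rademacher complexity. -/
def Rad (n : ℕ) (F : Set (𝕏 → ℝ)) (P : Measure 𝕏) : ℝ :=
  ∫ sx : (Fin n → Bool) × (Fin n → 𝕏),
    sSup ((fun f : 𝕏 → ℝ =>
      |(∑ i, (if sx.1 i then (1 : ℝ) else -1) * f (sx.2 i)) / n|) '' F)
    ∂((signMeasure n).prod (iidMeasure n P))

/-- Worst-case centered `p`-th moment: `ν_p(F,P)`. -/
def nu (p : ℝ) (F : Set (𝕏 → ℝ)) (P : Measure 𝕏) : ℝ :=
  sSup ((fun f : 𝕏 → ℝ => (∫ z, |f z - ∫ w, f w ∂P| ^ p ∂P) ^ (1 / p)) '' F)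

/-- Truncation `τ_M`. -/
def trunc (M x : ℝ) : ℝ := max (-M) (min M x)

/-- Centered class `F^o`. -/
def centered (F : Set (𝕏 → ℝ)) (P : Measure 𝕏) : Set (𝕏 → ℝ) :=
  (fun f : 𝕏 → ℝ => fun z => f z - ∫ w, f w ∂P) '' F

/-- Truncated class `τ_M ∘ G`. -/
def truncClass (M : ℝ) (G : Set (𝕏 → ℝ)) : Set (𝕏 → ℝ) :=
  (fun g : 𝕏 → ℝ => fun z => trunc M (g z)) '' G

/-- Truncation remainder `rem_M(G,P)`. -/
def rem (M : ℝ) (G : Set (𝕏 → ℝ)) (P : Measure 𝕏) : ℝ :=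
  sSup ((fun g : 𝕏 → ℝ => |∫ z, trunc M (g z) ∂P|) '' G)

/-- `p`-compatibility of a measure with a family of functions. -/
def Compatible (p : ℝ) (F : Set (𝕏 → ℝ)) (P : Measure 𝕏) : Prop :=
  (∀ f ∈ F, Measurable f) ∧
  (∀ f ∈ F, MemLp f (ENNReal.ofReal p) P) ∧
  ∃ D ⊆ F, D.Countable ∧ ∀ f ∈ F, ∃ u : ℕ → 𝕏 → ℝ, (∀ m, u m ∈ D) ∧
    (∀ z, Tendsto (fun m => u m z) atTop (nhds (f z))) ∧
    Tendsto (fun m => ∫ z, |u m z - f z| ^ p ∂P) atTop (nhds 0)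

/-- `X` is an i.i.d. sample from `P`. -/
def IsIIDSample {Ω : Type*} [MeasurableSpace Ω] (μpr : Measure Ω) {n : ℕ}
    (X : Fin n → Ω → 𝕏) (P : Measure 𝕏) : Prop :=
  (∀ i, Measurable (X i)) ∧
  iIndepFun X μpr ∧
  ∀ i, Measure.map (X i) μpr = P

/-- `Xε` is an `ε`-contaminated i.i.d. sample from `P`. -/
def IsContaminated {Ω : Type*} [MeasurableSpace Ω] (μpr : Measure Ω) {n : ℕ}
    (Xε : Fin n → Ω → 𝕏) (P : Measure 𝕏) (ε : ℝ) : Prop :=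
  ∃ X : Fin n → Ω → 𝕏, IsIIDSample μpr X P ∧
    ∀ ω, ((Finset.univ.filter fun i : Fin n => Xε i ω ≠ X i ω).card : ℝ) ≤ ε * n

/-!
Call an index bad when the contaminated linear combination differs from the truncated clean one
there; there are at most `⌊εn⌋ + Σ tⱼ ≤ k` bad indices, and every truncated clean value lies in
`[-A, A]` with `A = Σ |aⱼ| Mⱼ`. As at most `k` sorted values are bad, each order statistic in the
trimming window lies between two good ones, hence in `[-A, A]`. The trimmed sum then differs from
the sum of the truncated clean values by at most `2kA` inside the window (bad entries) plus `2kA`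
outside it, and renormalising from `n - 2k` to `n` costs a further `2kA`.
-/

open Finset

theorem abs_sum_le_card_mul {ι : Type*} (s : Finset ι) {f : ι → ℝ} {c : ℝ}
    (h : ∀ i ∈ s, |f i| ≤ c) : |∑ i ∈ s, f i| ≤ #s * c := by
  simpa using (abs_sum_le_sum_abs f s).trans (sum_le_card_nsmul s _ c h)

theorem abs_sum_sub_sum_le_card_mul {ι : Type*} (s : Finset ι) {f g : ι → ℝ} {c : ℝ}
    (h : ∀ i ∈ s, |f i - g i| ≤ c) :
    |∑ i ∈ s, f i - ∑ i ∈ s, g i| ≤ #{i ∈ s | f i ≠ g i} * c := by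
  rw [← sum_sub_distrib, ← sum_filter_of_ne (p := fun i => f i ≠ g i)
    fun i _ hi => sub_ne_zero.mp hi]
  exact abs_sum_le_card_mul _ fun i hi => h i (mem_filter.mp hi).1

theorem mem_Icc_of_monotone_of_card_filter_notMem_le {α : Type*} [Preorder α] {n k : ℕ}
    {v : Fin n → α} (hv : Monotone v) {lo hi : α} (hbad : #{p | v p ∉ Set.Icc lo hi} ≤ k)
    {i : Fin n} (hki : k ≤ i) (hik : (i : ℕ) < n - k) : v i ∈ Set.Icc lo hi := by
  have exists_good (s : Finset (Fin n)) (hs : k < #s) : ∃ p ∈ s, v p ∈ Set.Icc lo hi := by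
    obtain ⟨p, hps, hp⟩ := exists_mem_notMem_of_card_lt_card (hbad.trans_lt hs)
    exact ⟨p, hps, by simpa using hp⟩
  obtain ⟨p, hp, hp_good⟩ := exists_good (Iic i) (by rw [Fin.card_Iic]; omega)
  obtain ⟨q, hq, hq_good⟩ := exists_good (Ici i) (by rw [Fin.card_Ici]; omega)
  exact ⟨hp_good.1.trans (hv (mem_Iic.mp hp)), (hv (mem_Ici.mp hq)).trans hq_good.2⟩

theorem Fin.card_filter_le_val_lt_sub (n k : ℕ) :
    #{i : Fin n | k ≤ (i : ℕ) ∧ (i : ℕ) < n - k} = n - 2 * k := by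
  rw [show n - 2 * k = #(Ico k (n - k)) by rw [Nat.card_Ico]; omega]
  refine card_nbij Fin.val (fun i hi => ?_) Fin.val_injective.injOn fun x hx => ?_
  · simpa using hi
  · simp only [coe_Ico, Set.mem_Ico] at hx
    exact ⟨⟨x, by omega⟩, by simpa using hx, rfl⟩

theorem abs_div_sub_div_le {S T D N A c : ℝ} (hD : 0 < D) (hDN : D ≤ N) (hS : |S| ≤ D * A)
    (hST : |S - T| ≤ c) : |S / D - T / N| ≤ (c + (N - D) * A) / N := by
  have hN : 0 < N := hD.trans_le hDN
  have hsplit : S / D - T / N = (S - T) / N + S * ((N - D) / (D * N)) := by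
    field_simp
    ring
  have hscale : |S * ((N - D) / (D * N))| ≤ (N - D) * A / N := by
    have hfrac : 0 ≤ (N - D) / (D * N) := div_nonneg (sub_nonneg.mpr hDN) (by positivity)
    rw [abs_mul, abs_of_nonneg hfrac]
    calc |S| * ((N - D) / (D * N)) ≤ D * A * ((N - D) / (D * N)) := by gcongr
      _ = (N - D) * A / N := by field_simp
  rw [hsplit, add_div]
  refine (abs_add_le _ _).trans (add_le_add ?_ hscale)
  rw [abs_div, abs_of_pos hN]
  gcongr

lemma abs_trunc_le {M : ℝ} (hM : 0 ≤ M) (x : ℝ) : |trunc M x| ≤ M :=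
  abs_le.mpr ⟨le_max_left _ _, max_le (by linarith) (min_le_left _ _)⟩

lemma trunc_eq_self {M x : ℝ} (h : |x| ≤ M) : trunc M x = x := by
  rw [abs_le] at h
  rw [trunc, min_eq_right h.2, max_eq_right h.1]

lemma abs_sum_mul_trunc_le {ι : Type*} (s : Finset ι) (a M y : ι → ℝ) (hM : ∀ j, 0 ≤ M j) :
    |∑ j ∈ s, a j * trunc (M j) (y j)| ≤ ∑ j ∈ s, |a j| * M j :=
  (abs_sum_le_sum_abs _ _).trans <| sum_le_sum fun j _ => by
    rw [abs_mul]; exact mul_le_mul_of_nonneg_left (abs_trunc_le (hM j) _) (abs_nonneg _)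

theorem abs_apply_sort_le_of_card_ne_le {n k : ℕ} (y : Fin n → ℝ) {w : Fin n → ℝ} {A : ℝ}
    (hw : ∀ i, |w i| ≤ A) (hbad : #{i | y i ≠ w i} ≤ k) {p : Fin n} (hkp : k ≤ p)
    (hpk : (p : ℕ) < n - k) : |y (Tuple.sort y p)| ≤ A := by
  refine abs_le.mpr (mem_Icc_of_monotone_of_card_filter_notMem_le (Tuple.monotone_sort y)
    ((card_le_card_of_injOn (Tuple.sort y) (fun q hq => ?_) (Tuple.sort y).injective.injOn).trans
      hbad) hkp hpk)
  simp only [coe_filter, mem_univ, true_and, Set.mem_ofPred_eq, Function.comp_apply] at hq ⊢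
  exact fun heq => hq (abs_le.mp (heq ▸ hw _))

theorem abs_trimmedMean_sub_mean_le {𝕏 : Type*} {n k : ℕ} (h2k : 2 * k < n) (f : 𝕏 → ℝ)
    (x : Fin n → 𝕏) {w : Fin n → ℝ} {A : ℝ} (hw : ∀ i, |w i| ≤ A)
    (hbad : #{i | f (x i) ≠ w i} ≤ k) :
    |trimmedMean k f x - (∑ i, w i) / n| ≤ 6 * (k / n) * A := by
  set σ := Tuple.sort fun j => f (x j)
  set v : Fin n → ℝ := fun p => f (x (σ p))
  set I : Finset (Fin n) := {p | k ≤ (p : ℕ) ∧ (p : ℕ) < n - k}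
  have hA : 0 ≤ A := (abs_nonneg _).trans (hw ⟨0, by omega⟩)
  have hbad_sorted : #{p | v p ≠ w (σ p)} ≤ k :=
    (card_equiv σ fun p => by simp [v]).trans_le hbad
  have hv_bound : ∀ p ∈ I, |v p| ≤ A := fun p hp =>
    abs_apply_sort_le_of_card_ne_le _ hw hbad (mem_filter.mp hp).2.1 (mem_filter.mp hp).2.2
  have hI : #I = n - 2 * k := Fin.card_filter_le_val_lt_sub n k
  have hIc : #Iᶜ = 2 * k := by rw [card_compl, Fintype.card_fin, hI]; omega
  have hmiddle : |∑ p ∈ I, v p - ∑ p ∈ I, w (σ p)| ≤ k * (2 * A) := by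
    refine (abs_sum_sub_sum_le_card_mul I (c := 2 * A) fun p hp => ?_).trans ?_
    · exact (abs_sub _ _).trans (by linarith [hv_bound p hp, hw (σ p)])
    · gcongr
      exact_mod_cast (card_le_card (filter_subset_filter _ (subset_univ I))).trans hbad_sorted
  have houter : |∑ p ∈ Iᶜ, w (σ p)| ≤ 2 * k * A := by
    simpa [hIc] using abs_sum_le_card_mul Iᶜ fun p _ => hw (σ p)
  have htotal : ∑ i, w i = ∑ p ∈ I, w (σ p) + ∑ p ∈ Iᶜ, w (σ p) := by
    rw [sum_add_sum_compl, Equiv.sum_comp]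
  have hcompare : |∑ p ∈ I, v p - ∑ i, w i| ≤ 4 * k * A := by
    rw [htotal, ← sub_sub]
    linarith [abs_sub (∑ p ∈ I, v p - ∑ p ∈ I, w (σ p)) (∑ p ∈ Iᶜ, w (σ p))]
  have hD : (0 : ℝ) < (n - 2 * k : ℕ) := by exact_mod_cast Nat.sub_pos_of_lt h2k
  have hDn : ((n - 2 * k : ℕ) : ℝ) ≤ n := by exact_mod_cast Nat.sub_le n (2 * k)
  have htrim : trimmedMean k f x = (∑ p ∈ I, v p) / (n - 2 * k : ℕ) := rfl
  rw [htrim]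
  calc _ ≤ (4 * k * A + (n - (n - 2 * k : ℕ)) * A) / n :=
        abs_div_sub_div_le hD hDn (by simpa [hI] using abs_sum_le_card_mul I hv_bound) hcompare
    _ = 6 * (k / n) * A := by
        rw [Nat.cast_sub h2k.le]
        push_cast
        ring

lemma card_filter_sum_ne_sum_trunc_le {𝕏 : Type*} {n m : ℕ} (X Xε : Fin n → 𝕏)
    (a M : Fin m → ℝ) (gs : Fin m → 𝕏 → ℝ) :
    #{i | ∑ j, a j * gs j (Xε i) ≠ ∑ j, a j * trunc (M j) (gs j (X i))} ≤
      #{i | Xε i ≠ X i} + ∑ j, #{i | M j < |gs j (X i)|} := by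
  refine (card_le_card fun i hi => ?_).trans
    ((card_union_le _ _).trans (add_le_add le_rfl card_biUnion_le))
  contrapose! hi
  simp only [mem_union, mem_biUnion, mem_filter, mem_univ, true_and, not_or, not_exists,
    not_lt, not_not] at hi
  simp only [mem_filter, mem_univ, true_and, not_not, hi.1]
  exact sum_congr rfl fun j _ => by rw [trunc_eq_self (hi.2 j)]

theorem bounding_lemma_general
    {𝕏 : Type*} (n m : ℕ) (hn : 0 < n) (ε : ℝ)
    (X Xε : Fin n → 𝕏)
    (hdiff : (Finset.univ.filter fun i : Fin n => Xε i ≠ X i).card ≤ ⌊ε * n⌋₊)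
    (G : Fin m → Set (𝕏 → ℝ)) (t : Fin m → ℕ) (M : Fin m → ℝ) (hM : ∀ j, 0 ≤ M j)
    (hcount : ∀ j, ∀ g ∈ G j,
      (Finset.univ.filter fun i : Fin n => M j < |g (X i)|).card ≤ t j)
    (φ : ℝ) (k : ℕ) (hk : (k : ℝ) = φ * n)
    (hφ1 : ((⌊ε * n⌋₊ + ∑ j, t j : ℕ) : ℝ) / n ≤ φ) (hφ2 : φ < 1 / 2)
    (a : Fin m → ℝ) (gs : Fin m → 𝕏 → ℝ) (hgs : ∀ j, gs j ∈ G j) :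
    |trimmedMean k (fun z => ∑ j, a j * gs j z) Xε
        - ∑ j, a j * ((∑ i, trunc (M j) (gs j (X i))) / n)| ≤
      6 * φ * ∑ j, |a j| * M j := by
  have hn' : (0 : ℝ) < n := Nat.cast_pos.mpr hn
  have hbudget : ⌊ε * n⌋₊ + ∑ j, t j ≤ k := by
    exact_mod_cast ((div_le_iff₀ hn').mp hφ1).trans_eq hk.symm
  have h2k : 2 * k < n := by exact_mod_cast (show (2 * k : ℝ) < n by rw [hk]; nlinarith)
  have hbad := (card_filter_sum_ne_sum_trunc_le X Xε a M gs).trans <|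
    (add_le_add hdiff (sum_le_sum fun j _ => hcount j _ (hgs j))).trans hbudget
  have hmean : ∑ j, a j * ((∑ i, trunc (M j) (gs j (X i))) / n) =
      (∑ i, ∑ j, a j * trunc (M j) (gs j (X i))) / n := by
    simp only [mul_div_assoc', mul_sum, ← sum_div]
    rw [sum_comm]
  rw [hmean]
  calc _ ≤ 6 * (k / n) * ∑ j, |a j| * M j := abs_trimmedMean_sub_mean_le h2k _ Xε
          (fun i => abs_sum_mul_trunc_le _ a M _ hM) hbad
    _ = 6 * φ * ∑ j, |a j| * M j := by rw [hk, mul_div_cancel_right₀ _ hn'.ne']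

/-- Bounding lemma (deterministic). -/
theorem bounding_lemma
    {𝕏 : Type*} (n m : ℕ) (hn : 0 < n) (hm : 0 < m) (ε : ℝ) (hε0 : 0 ≤ ε)
    (X Xε : Fin n → 𝕏)
    (hdiff : (Finset.univ.filter fun i : Fin n => Xε i ≠ X i).card ≤ ⌊ε * n⌋₊)
    (G : Fin m → Set (𝕏 → ℝ)) (t : Fin m → ℕ) (M : Fin m → ℝ) (hM : ∀ j, 0 ≤ M j)
    (hcount : ∀ j, ∀ g ∈ G j,
      (Finset.univ.filter fun i : Fin n => M j < |g (X i)|).card ≤ t j)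
    (φ : ℝ) (k : ℕ) (hk : (k : ℝ) = φ * n)
    (hφ1 : ((⌊ε * n⌋₊ + ∑ j, t j : ℕ) : ℝ) / n ≤ φ) (hφ2 : φ < 1 / 2)
    (a : Fin m → ℝ) (gs : Fin m → 𝕏 → ℝ) (hgs : ∀ j, gs j ∈ G j) :
    |trimmedMean k (fun z => ∑ j, a j * gs j z) Xε
        - ∑ j, a j * ((∑ i, trunc (M j) (gs j (X i))) / n)| ≤
      6 * φ * ∑ j, |a j| * M j :=
  bounding_lemma_general n m hn ε X Xε hdiff G t M hM hcount φ k hk hφ1 hφ2 a gs hgs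

end Paper
end
end

section
/- (Fixed point argument.) In the regression setting, let Z^ε_{1:n} be a fixed tuple in (X×ℝ)^n, let 1 ≤ φn < n/2, write T̂^ε(h) := T̂_{n,φn}(h, Z^ε_{1:n}), and let f̂ ∈ argmin_{f∈F} sup_{g∈F} T̂^ε(ℓ_f − ℓ_g). Write r_f := ‖f − f*_P‖_{L²(P_X)}. If r > 0 and γ > 0 are such that inf{T̂^ε(ℓ_f − ℓ_{f*_P}) : f∈F, r_f = r} ≥ γ ≥ 2·sup{T̂^ε(m_{f,P} − P m_{f,P}) : f∈F, r_f ≤ r}, then ‖f̂ − f*_P‖_{L²(P_X)} ≤ r and R_P(f̂) − R_P(f*_P) ≤ r² + 2γ. -/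
/-!
Write `T` for the trimmed mean on `Z` and `r_g` for `dist2 P fstar g`. `T` is monotone, positively
homogeneous and odd, and it commutes with adding constants since `2k < n`. By convexity of `F` and
of the square loss, `T(ℓ_{f* + t(g - f*)} - ℓ_{f*}) ≤ t T(ℓ_g - ℓ_{f*})` for `t ∈ [0, 1]`; pulling
`g` with `r_g > r` back onto the sphere `r_g = r` gives `T(ℓ_g - ℓ_{f*}) ≥ γ / t > γ`. Inside the
ball, `ℓ_{f*} - ℓ_g ≤ 2 m_g` and the first-order condition `P m_g ≤ 0` give
`T(ℓ_{f*} - ℓ_g) ≤ γ + 2 P m_g ≤ γ`. So `sup_g T(ℓ_{f*} - ℓ_g) ≤ γ`, and by minimality of `f̂` also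
`T(ℓ_{f̂} - ℓ_{f*}) ≤ γ`, which forces `r_{f̂} ≤ r`. Finally
`R(f̂) - R(f*) = r_{f̂}² - 2 P m_{f̂}`, and `-γ ≤ T(ℓ_{f*} - ℓ_{f̂}) ≤ γ + 2 P m_{f̂}` bounds the
second term by `2γ`.
-/

open MeasureTheory ProbabilityTheory Real Filter
open scoped BigOperators ENNReal NNReal Classical

noncomputable section

namespace Paper

variable {𝕏 : Type*} [MeasurableSpace 𝕏]

variable {𝕏 : Type*} [MeasurableSpace 𝕏]

/-- The marginal of `P` on the covariate space. -/
def marginalX (P : Measure (𝕏 × ℝ)) : Measure 𝕏 := P.map Prod.fst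

/-- Quadratic loss `ℓ_f`. -/
def loss (f : 𝕏 → ℝ) : 𝕏 × ℝ → ℝ := fun z => (f z.1 - z.2) ^ 2

/-- Quadratic risk `R_P(f)`. -/
def risk (P : Measure (𝕏 × ℝ)) (f : 𝕏 → ℝ) : ℝ := ∫ z, loss f z ∂P

/-- `‖f - f*‖_{L²(P_X)}`. -/
def dist2 (P : Measure (𝕏 × ℝ)) (fstar f : 𝕏 → ℝ) : ℝ :=
  Real.sqrt (∫ x, (f x - fstar x) ^ 2 ∂(marginalX P))

/-- `‖f - f*‖_{L¹(P_X)}`. -/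
def dist1 (P : Measure (𝕏 × ℝ)) (fstar f : 𝕏 → ℝ) : ℝ :=
  ∫ x, |f x - fstar x| ∂(marginalX P)

/-- Multiplier term `m_{f,P}(x,y) = (y - f*(x)) (f(x) - f*(x))`. -/
def mult (fstar f : 𝕏 → ℝ) : 𝕏 × ℝ → ℝ := fun z => (z.2 - fstar z.1) * (f z.1 - fstar z.1)

/-- Small-ball parameter `θ₀(F,P)`. -/
def theta0 (F : Set (𝕏 → ℝ)) (P : Measure (𝕏 × ℝ)) (fstar : 𝕏 → ℝ) : ℝ :=
  sSup ((fun f => dist2 P fstar f / dist1 P fstar f) '' {f ∈ F | 0 < dist1 P fstar f})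

/-- Multiplier moment parameter `κ_p(F,P)`. -/
def kappa (p : ℝ) (F : Set (𝕏 → ℝ)) (P : Measure (𝕏 × ℝ)) (fstar : 𝕏 → ℝ) : ℝ :=
  sSup ((fun f =>
      (∫ z, |mult fstar f z - ∫ w, mult fstar f w ∂P| ^ p ∂P) ^ (1 / p)
        / dist2 P fstar f) '' {f ∈ F | 0 < dist2 P fstar f})

/-- Localized quadratic class `F_q(r,P)` (lifted to functions of `(x,y)`). -/
def Fq (F : Set (𝕏 → ℝ)) (P : Measure (𝕏 × ℝ)) (fstar : 𝕏 → ℝ) (r : ℝ) :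
    Set (𝕏 × ℝ → ℝ) :=
  (fun f : 𝕏 → ℝ => fun z : 𝕏 × ℝ => f z.1 - fstar z.1) '' {f ∈ F | dist2 P fstar f = r}

/-- Localized multiplier class `F_m(r,P)`. -/
def Fm (F : Set (𝕏 → ℝ)) (P : Measure (𝕏 × ℝ)) (fstar : 𝕏 → ℝ) (r : ℝ) :
    Set (𝕏 × ℝ → ℝ) :=
  (fun f : 𝕏 → ℝ => fun z : 𝕏 × ℝ => mult fstar f z - ∫ w, mult fstar f w ∂P) ''
    {f ∈ F | dist2 P fstar f ≤ r}

/-- Critical radius `r_q(δ,F,P)`, valued in `ℝ≥0∞` (so that `inf ∅ = ∞`). -/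
def rq (n : ℕ) (δ : ℝ) (F : Set (𝕏 → ℝ)) (P : Measure (𝕏 × ℝ)) (fstar : 𝕏 → ℝ) : ℝ≥0∞ :=
  sInf (ENNReal.ofReal ''
    {r : ℝ | 0 < r ∧ (Fq F P fstar r).Nonempty ∧ Rad n (Fq F P fstar r) P ≤ δ * r})

/-- Critical radius `r_m(δ,F,P)`, valued in `ℝ≥0∞` (so that `inf ∅ = ∞`). -/
def rm (n : ℕ) (δ : ℝ) (F : Set (𝕏 → ℝ)) (P : Measure (𝕏 × ℝ)) (fstar : 𝕏 → ℝ) : ℝ≥0∞ :=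
  sInf (ENNReal.ofReal ''
    {r : ℝ | 0 < r ∧ Rad n (Fm F P fstar r) P ≤ δ * r ^ 2})

section TrimmedMean

open Finset

variable {α : Type*} {n k : ℕ}

def orderStat (a : Fin n → ℝ) : Fin n → ℝ := a ∘ Tuple.sort a

theorem monotone_orderStat (a : Fin n → ℝ) : Monotone (orderStat a) :=
  Tuple.monotone_sort a

theorem orderStat_le_iff (a : Fin n → ℝ) (i : Fin n) (c : ℝ) :
    orderStat a i ≤ c ↔ (i : ℕ) < #{j | a j ≤ c} := by
  rw [← Tuple.lt_card_le_iff_apply_le_of_monotone (monotone_orderStat a)]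
  congr! 1
  exact card_equiv (Tuple.sort a) fun j => by rw [mem_filter_univ, mem_filter_univ]; rfl

theorem orderStat_le_orderStat {a b : Fin n → ℝ} (h : ∀ j, a j ≤ b j) (i : Fin n) :
    orderStat a i ≤ orderStat b i := by
  rw [orderStat_le_iff]
  calc (i : ℕ) < #{j | b j ≤ orderStat b i} := (orderStat_le_iff b i _).1 le_rfl
    _ ≤ #{j | a j ≤ orderStat b i} :=
      card_le_card fun j => by simpa using (h j).trans

theorem orderStat_eq_comp_of_monotone {a : Fin n → ℝ} {σ : Equiv.Perm (Fin n)}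
    (h : Monotone (a ∘ σ)) : orderStat a = a ∘ σ :=
  (Tuple.comp_sort_eq_comp_iff_monotone.2 h).symm

theorem orderStat_const_mul {c : ℝ} (hc : 0 ≤ c) (a : Fin n → ℝ) :
    orderStat (fun j => c * a j) = fun i => c * orderStat a i :=
  orderStat_eq_comp_of_monotone fun _ _ hij =>
    mul_le_mul_of_nonneg_left (monotone_orderStat a hij) hc

theorem orderStat_add_const (c : ℝ) (a : Fin n → ℝ) :
    orderStat (fun j => a j + c) = fun i => orderStat a i + c :=
  orderStat_eq_comp_of_monotone fun _ _ hij => add_le_add_left (monotone_orderStat a hij) c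

theorem orderStat_neg (a : Fin n → ℝ) :
    orderStat (fun j => -a j) = fun i => -orderStat a i.rev :=
  orderStat_eq_comp_of_monotone (σ := Fin.revPerm.trans (Tuple.sort a)) fun _ _ hij =>
    neg_le_neg (monotone_orderStat a (Fin.rev_le_rev.2 hij))

def trimmedIndices (n k : ℕ) : Finset (Fin n) := {i | k ≤ (i : ℕ) ∧ (i : ℕ) < n - k}

theorem card_trimmedIndices : #(trimmedIndices n k) = n - 2 * k := by
  have : (trimmedIndices n k).map Fin.valEmbedding = Ico k (n - k) := by
    ext m
    simp only [trimmedIndices, Finset.mem_map, Finset.mem_filter_univ, Fin.valEmbedding_apply,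
      Finset.mem_Ico]
    exact ⟨by rintro ⟨i, hi, rfl⟩; exact hi, fun hm => ⟨⟨m, by omega⟩, hm, rfl⟩⟩
  rw [← card_map, this, Nat.card_Ico]
  omega

theorem rev_mem_trimmedIndices {i : Fin n} :
    i.rev ∈ trimmedIndices n k ↔ i ∈ trimmedIndices n k := by
  simp only [trimmedIndices, mem_filter_univ, Fin.val_rev]
  omega

variable {f g : α → ℝ} {x : Fin n → α}

theorem trimmedMean_eq_sum_orderStat (k : ℕ) (f : α → ℝ) (x : Fin n → α) :
    trimmedMean k f x =
      (∑ i ∈ trimmedIndices n k, orderStat (fun j => f (x j)) i) / ((n - 2 * k : ℕ) : ℝ) :=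
  rfl

theorem trimmedMean_mono (h : ∀ i, f (x i) ≤ g (x i)) :
    trimmedMean k f x ≤ trimmedMean k g x := by
  rw [trimmedMean_eq_sum_orderStat, trimmedMean_eq_sum_orderStat]
  gcongr with i
  exact orderStat_le_orderStat h i

theorem trimmedMean_const_mul {c : ℝ} (hc : 0 ≤ c) (f : α → ℝ) (x : Fin n → α) :
    trimmedMean k (fun z => c * f z) x = c * trimmedMean k f x := by
  rw [trimmedMean_eq_sum_orderStat, trimmedMean_eq_sum_orderStat, orderStat_const_mul hc,
    ← mul_sum, mul_div_assoc]

theorem trimmedMean_add_const (hk : 2 * k < n) (c : ℝ) (f : α → ℝ) (x : Fin n → α) :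
    trimmedMean k (fun z => f z + c) x = trimmedMean k f x + c := by
  have hne : ((n - 2 * k : ℕ) : ℝ) ≠ 0 := Nat.cast_ne_zero.2 (by omega)
  rw [trimmedMean_eq_sum_orderStat, trimmedMean_eq_sum_orderStat, orderStat_add_const,
    sum_add_distrib, sum_const, card_trimmedIndices, nsmul_eq_mul, add_div,
    mul_div_cancel_left₀ c hne]

theorem trimmedMean_neg (f : α → ℝ) (x : Fin n → α) :
    trimmedMean k (fun z => -f z) x = -trimmedMean k f x := by
  rw [trimmedMean_eq_sum_orderStat, trimmedMean_eq_sum_orderStat, orderStat_neg, ← neg_div,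
    ← sum_neg_distrib]
  congr 1
  exact sum_equiv Fin.revPerm (fun i => rev_mem_trimmedIndices.symm) fun _ _ => rfl

theorem trimmedMean_sub_comm (f g : α → ℝ) (x : Fin n → α) :
    trimmedMean k (fun z => f z - g z) x = -trimmedMean k (fun z => g z - f z) x := by
  simp only [← trimmedMean_neg, neg_sub]

end TrimmedMean

section Loss

variable {X : Type*} {F : Set (X → ℝ)} {fstar g : X → ℝ} {t : ℝ} {n k : ℕ} {Z : Fin n → X × ℝ}

theorem loss_sub_loss_eq (fstar g : X → ℝ) (z : X × ℝ) :
    loss g z - loss fstar z = (g z.1 - fstar z.1) ^ 2 - 2 * mult fstar g z := by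
  simp only [loss, mult]
  ring

theorem loss_add_smul_sub_sub_le (ht₀ : 0 ≤ t) (ht₁ : t ≤ 1) (z : X × ℝ) :
    loss (fstar + t • (g - fstar)) z - loss fstar z ≤ t * (loss g z - loss fstar z) := by
  simp only [loss, Pi.add_apply, Pi.smul_apply, Pi.sub_apply, smul_eq_mul]
  nlinarith [mul_nonneg (mul_nonneg ht₀ (sub_nonneg.2 ht₁)) (sq_nonneg (g z.1 - fstar z.1))]

theorem mult_add_smul_sub (fstar g : X → ℝ) (t : ℝ) :
    mult fstar (fstar + t • (g - fstar)) = fun z => t * mult fstar g z := by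
  ext z
  simp only [mult, Pi.add_apply, Pi.smul_apply, Pi.sub_apply, smul_eq_mul]
  ring

theorem trimmedMean_loss_sub_loss_le (hk : 2 * k < n) (c : ℝ) :
    trimmedMean k (fun z => loss fstar z - loss g z) Z ≤
      2 * trimmedMean k (fun z => mult fstar g z - c) Z + 2 * c := by
  rw [← trimmedMean_const_mul zero_le_two, ← trimmedMean_add_const hk]
  refine trimmedMean_mono fun i => ?_
  have := loss_sub_loss_eq fstar g (Z i)
  nlinarith [sq_nonneg (g (Z i).1 - fstar (Z i).1)]

theorem trimmedMean_loss_add_smul_sub_le (ht₀ : 0 ≤ t) (ht₁ : t ≤ 1) :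
    trimmedMean k (fun z => loss (fstar + t • (g - fstar)) z - loss fstar z) Z ≤
      t * trimmedMean k (fun z => loss g z - loss fstar z) Z :=
  (trimmedMean_mono fun i => loss_add_smul_sub_sub_le ht₀ ht₁ (Z i)).trans_eq
    (trimmedMean_const_mul ht₀ _ _)

theorem trimmedMean_loss_sub_le_sSup (f : X → ℝ) (hg : g ∈ F) :
    trimmedMean k (fun z => loss f z - loss g z) Z ≤
      sSup ((fun g => trimmedMean k (fun z => loss f z - loss g z) Z) '' F) := by
  refine le_csSup ⟨trimmedMean k (loss f) Z, ?_⟩ (Set.mem_image_of_mem _ hg)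
  rintro _ ⟨h, -, rfl⟩
  exact trimmedMean_mono fun i => sub_le_self _ (sq_nonneg _)

end Loss

section Regression

variable {F : Set (𝕏 → ℝ)} {P : Measure (𝕏 × ℝ)} {fstar g : 𝕏 → ℝ} {t : ℝ} {n k : ℕ}
  {Z : Fin n → 𝕏 × ℝ} {r γ : ℝ}

theorem Compatible.memLp {μ : Measure 𝕏} {f : 𝕏 → ℝ}
    (h : Compatible 2 F μ) (hf : f ∈ F) : MemLp f 2 μ := by
  simpa using h.2.1 f hf

theorem dist2_add_smul_sub (ht : 0 ≤ t) :
    dist2 P fstar (fstar + t • (g - fstar)) = t * dist2 P fstar g := by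
  have : ∀ x, ((fstar + t • (g - fstar)) x - fstar x) ^ 2 = t ^ 2 * (g x - fstar x) ^ 2 := by
    intro x
    simp only [Pi.add_apply, Pi.smul_apply, Pi.sub_apply, smul_eq_mul]
    ring
  simp only [dist2, this, integral_const_mul, Real.sqrt_mul (sq_nonneg t), Real.sqrt_sq ht]

theorem dist2_sq (hg : AEStronglyMeasurable g (marginalX P))
    (hfstar : AEStronglyMeasurable fstar (marginalX P)) :
    dist2 P fstar g ^ 2 = ∫ z, (g z.1 - fstar z.1) ^ 2 ∂P := by
  rw [dist2, Real.sq_sqrt (integral_nonneg fun _ => sq_nonneg _), marginalX,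
    integral_map (f := fun x => (g x - fstar x) ^ 2) measurable_fst.aemeasurable
      ((hg.sub hfstar).pow 2)]

theorem risk_sub_risk_eq (hg : MemLp g 2 (marginalX P)) (hfstar : MemLp fstar 2 (marginalX P))
    (hY : MemLp (fun z : 𝕏 × ℝ => z.2) 2 P) :
    risk P g - risk P fstar = dist2 P fstar g ^ 2 - 2 * ∫ z, mult fstar g z ∂P := by
  have hfst : MeasurePreserving Prod.fst P (marginalX P) := ⟨measurable_fst, rfl⟩
  have hg' := hg.comp_measurePreserving hfst
  have hfstar' := hfstar.comp_measurePreserving hfst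
  have hdiff : Integrable (fun z : 𝕏 × ℝ => (g z.1 - fstar z.1) ^ 2) P :=
    (hg'.sub hfstar').integrable_sq
  have hmult : Integrable (mult fstar g) P := (hY.sub hfstar').integrable_mul (hg'.sub hfstar')
  have hloss : ∀ f : 𝕏 → ℝ, MemLp (f ∘ Prod.fst) 2 P → Integrable (loss f) P :=
    fun f hf => (hf.sub hY).integrable_sq
  rw [risk, risk, ← integral_sub (hloss g hg') (hloss fstar hfstar')]
  simp only [loss_sub_loss_eq fstar g]
  rw [integral_sub hdiff (hmult.const_mul 2), integral_const_mul,
    dist2_sq hg.aestronglyMeasurable hfstar.aestronglyMeasurable]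

open Topology in
theorem integral_mult_nonpos (hconv : Convex ℝ F)
    (hF : ∀ f ∈ F, MemLp f 2 (marginalX P)) (hY : MemLp (fun z : 𝕏 × ℝ => z.2) 2 P)
    (hfstar : fstar ∈ F) (hmin : ∀ f ∈ F, risk P fstar ≤ risk P f) (hg : g ∈ F) :
    ∫ z, mult fstar g z ∂P ≤ 0 := by
  -- along the segment towards `g`, the excess risk `t² r_g² - 2t P m_g` is nonnegative
  have hsmall : ∀ t ∈ Set.Ioc (0 : ℝ) 1,
      ∫ z, mult fstar g z ∂P ≤ t * (dist2 P fstar g ^ 2 / 2) := by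
    rintro t ⟨ht₀, ht₁⟩
    have hgt := hconv.add_smul_sub_mem hfstar hg ⟨ht₀.le, ht₁⟩
    have hexcess := sub_nonneg.2 (hmin _ hgt)
    rw [risk_sub_risk_eq (hF _ hgt) (hF _ hfstar) hY, dist2_add_smul_sub ht₀.le,
      mult_add_smul_sub, integral_const_mul] at hexcess
    have hfactor : 0 ≤ t * (t * (dist2 P fstar g ^ 2 / 2) - ∫ z, mult fstar g z ∂P) := by
      linarith
    exact sub_nonneg.1 (nonneg_of_mul_nonneg_right hfactor ht₀)
  have hlim : Tendsto (fun t => t * (dist2 P fstar g ^ 2 / 2)) (𝓝[>] 0) (𝓝 0) := by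
    simpa using (tendsto_id.mul_const _).mono_left (nhdsWithin_le_nhds (a := (0 : ℝ)))
  exact ge_of_tendsto hlim (Filter.mem_of_superset (Ioc_mem_nhdsGT one_pos) hsmall)

theorem lt_trimmedMean_loss_sub_of_lt_dist2 (hconv : Convex ℝ F) (hfstar : fstar ∈ F)
    (hg : g ∈ F) (hr : 0 < r) (hγ : 0 < γ)
    (hlow : ∀ f ∈ F, dist2 P fstar f = r →
      γ ≤ trimmedMean k (fun z => loss f z - loss fstar z) Z)
    (hgr : r < dist2 P fstar g) :
    γ < trimmedMean k (fun z => loss g z - loss fstar z) Z := by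
  have hd : 0 < dist2 P fstar g := hr.trans hgr
  set t := r / dist2 P fstar g
  have ht₀ : 0 < t := div_pos hr hd
  have ht₁ : t < 1 := (div_lt_one hd).2 hgr
  have hgt := hconv.add_smul_sub_mem hfstar hg ⟨ht₀.le, ht₁.le⟩
  have hdt : dist2 P fstar (fstar + t • (g - fstar)) = r := by
    rw [dist2_add_smul_sub ht₀.le, div_mul_cancel₀ r hd.ne']
  have hγt : γ ≤ t * trimmedMean k (fun z => loss g z - loss fstar z) Z :=
    (hlow _ hgt hdt).trans (trimmedMean_loss_add_smul_sub_le ht₀.le ht₁.le)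
  by_contra! hle
  nlinarith [mul_le_mul_of_nonneg_left hle ht₀.le]

end Regression

theorem fixed_point_argument_general
    {𝕏 : Type*} [MeasurableSpace 𝕏] (F : Set (𝕏 → ℝ)) (P : Measure (𝕏 × ℝ))
    (hconv : Convex ℝ F) (hcompat : Compatible 2 F (marginalX P))
    (hY : MemLp (fun z : 𝕏 × ℝ => z.2) 2 P)
    (fstar : 𝕏 → ℝ) (hfstarF : fstar ∈ F) (hmin : ∀ f ∈ F, risk P fstar ≤ risk P f)
    (n : ℕ) (Z : Fin n → 𝕏 × ℝ) (k : ℕ) (hk2 : 2 * k < n)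
    (fhat : 𝕏 → ℝ) (hfhatF : fhat ∈ F)
    (hfhat : ∀ f ∈ F,
      sSup ((fun g : 𝕏 → ℝ =>
          trimmedMean k (fun z => loss fhat z - loss g z) Z) '' F) ≤
      sSup ((fun g : 𝕏 → ℝ =>
          trimmedMean k (fun z => loss f z - loss g z) Z) '' F))
    (r γ : ℝ) (hr : 0 < r) (hγ : 0 < γ)
    (hlow : ∀ f ∈ F, dist2 P fstar f = r →
      γ ≤ trimmedMean k (fun z => loss f z - loss fstar z) Z)
    (hhigh : ∀ f ∈ F, dist2 P fstar f ≤ r →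
      2 * trimmedMean k (fun z => mult fstar f z - ∫ w, mult fstar f w ∂P) Z ≤ γ) :
    dist2 P fstar fhat ≤ r ∧ risk P fhat - risk P fstar ≤ r ^ 2 + 2 * γ := by
  have hF : ∀ f ∈ F, MemLp f 2 (marginalX P) := fun f hf => hcompat.memLp hf
  have hnear : ∀ g ∈ F, dist2 P fstar g ≤ r →
      trimmedMean k (fun z => loss fstar z - loss g z) Z ≤ γ + 2 * ∫ z, mult fstar g z ∂P :=
    fun g hg hgr => (trimmedMean_loss_sub_loss_le hk2 _).trans (by linarith [hhigh g hg hgr])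
  have hfar : ∀ g ∈ F, r < dist2 P fstar g →
      γ < trimmedMean k (fun z => loss g z - loss fstar z) Z :=
    fun g hg => lt_trimmedMean_loss_sub_of_lt_dist2 hconv hfstarF hg hr hγ hlow
  have hstar : ∀ g ∈ F, trimmedMean k (fun z => loss fstar z - loss g z) Z ≤ γ := by
    intro g hg
    rcases le_or_gt (dist2 P fstar g) r with hgr | hgr
    · linarith [hnear g hg hgr, integral_mult_nonpos hconv hF hY hfstarF hmin hg]
    · linarith [trimmedMean_sub_comm (k := k) (loss fstar) (loss g) Z, hfar g hg hgr]
  have hhat : trimmedMean k (fun z => loss fhat z - loss fstar z) Z ≤ γ :=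
    (trimmedMean_loss_sub_le_sSup fhat hfstarF).trans <| (hfhat fstar hfstarF).trans <|
      csSup_le ⟨_, Set.mem_image_of_mem _ hfstarF⟩ (Set.forall_mem_image.2 hstar)
  have hdist : dist2 P fstar fhat ≤ r := not_lt.1 fun h => (hfar fhat hfhatF h).not_ge hhat
  refine ⟨hdist, ?_⟩
  have hsq : dist2 P fstar fhat ^ 2 ≤ r ^ 2 := pow_le_pow_left₀ (Real.sqrt_nonneg _) hdist 2
  rw [risk_sub_risk_eq (hF _ hfhatF) (hF _ hfstarF) hY]
  linarith [hnear fhat hfhatF hdist, trimmedMean_sub_comm (k := k) (loss fstar) (loss fhat) Z]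

/-- the fixed point argument (Lemma `lemma:fixedpointargument`). -/
theorem fixed_point_argument
    {𝕏 : Type*} [MeasurableSpace 𝕏] (F : Set (𝕏 → ℝ)) (P : Measure (𝕏 × ℝ))
    [IsProbabilityMeasure P]
    (hconv : Convex ℝ F) (hcompat : Compatible 2 F (marginalX P))
    (hY : MemLp (fun z : 𝕏 × ℝ => z.2) 2 P)
    (fstar : 𝕏 → ℝ) (hfstarF : fstar ∈ F) (hmin : ∀ f ∈ F, risk P fstar ≤ risk P f)
    (n : ℕ) (Z : Fin n → 𝕏 × ℝ) (k : ℕ) (hk1 : 1 ≤ k) (hk2 : 2 * k < n)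
    (fhat : 𝕏 → ℝ) (hfhatF : fhat ∈ F)
    (hfhat : ∀ f ∈ F,
      sSup ((fun g : 𝕏 → ℝ =>
          trimmedMean k (fun z => loss fhat z - loss g z) Z) '' F) ≤
      sSup ((fun g : 𝕏 → ℝ =>
          trimmedMean k (fun z => loss f z - loss g z) Z) '' F))
    (r γ : ℝ) (hr : 0 < r) (hγ : 0 < γ)
    (hlow : ∀ f ∈ F, dist2 P fstar f = r →
      γ ≤ trimmedMean k (fun z => loss f z - loss fstar z) Z)
    (hhigh : ∀ f ∈ F, dist2 P fstar f ≤ r →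
      2 * trimmedMean k (fun z => mult fstar f z - ∫ w, mult fstar f w ∂P) Z ≤ γ) :
    dist2 P fstar fhat ≤ r ∧ risk P fhat - risk P fstar ≤ r ^ 2 + 2 * γ :=
  fixed_point_argument_general F P hconv hcompat hY fstar hfstarF hmin n Z k hk2 fhat hfhatF hfhat r
    γ hr hγ hlow hhigh

end Paper
end
end

section
/- Let x_{1:n} ∈ X^n, let g : X → ℝ, let M > 0, and let k be an integer with 1 ≤ k < n/2. If #{i ∈ [n] : |g(x_i)| > M} ≤ k, then T̂_{n,k}(g, x_{1:n}) = T̂_{n,k}(τ_M∘g, x_{1:n}). -/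
/-!
The truncation `τ_M` is monotone, so it commutes with sorting: the order statistics of `τ_M ∘ g`
are `τ_M` applied to those of `g`. If at most `k` values satisfy `|g (x i)| > M`, then at most `k`
lie above `M` and at most `k` below `-M`, so the order statistics of ranks `k, …, n - k - 1` kept by
the trimmed mean lie in `[-M, M]`, where `τ_M` is the identity.
-/

open MeasureTheory ProbabilityTheory Real Filter
open scoped BigOperators ENNReal NNReal Classical

noncomputable section

namespace Paper

variable {𝕏 : Type*} [MeasurableSpace 𝕏]

section OrderStatistics

open Tuple

variable {n : ℕ} {α : Type*} [LinearOrder α]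

theorem _root_.Tuple.comp_sort_comp_of_monotone {β : Type*} [LinearOrder β] {φ : α → β}
    (hφ : Monotone φ) (f : Fin n → α) : (φ ∘ f) ∘ sort (φ ∘ f) = φ ∘ f ∘ sort f :=
  (comp_sort_eq_comp_iff_monotone.mpr (hφ.comp (monotone_sort f))).symm

theorem _root_.Tuple.comp_sort_le_of_card_le {f : Fin n → α} {b : α} {k : ℕ}
    (hcard : (Finset.univ.filter fun j => b < f j).card ≤ k) {i : Fin n} (hi : (i : ℕ) < n - k) :
    f (sort f i) ≤ b := by
  by_contra! hlt
  have hmaps : Set.MapsTo (sort f) (Finset.Ici i) (Finset.univ.filter fun j => b < f j) :=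
    fun j hj => by
      simpa using hlt.trans_le (monotone_sort f (Finset.mem_Ici.mp hj))
  have hle := Finset.card_le_card_of_injOn _ hmaps (sort f).injective.injOn
  rw [Fin.card_Ici] at hle
  omega

theorem _root_.Tuple.le_comp_sort_of_card_le {f : Fin n → α} {a : α} {k : ℕ}
    (hcard : (Finset.univ.filter fun j => f j < a).card ≤ k) {i : Fin n} (hi : k ≤ (i : ℕ)) :
    a ≤ f (sort f i) := by
  by_contra! hlt
  have hmaps : Set.MapsTo (sort f) (Finset.Iic i) (Finset.univ.filter fun j => f j < a) :=
    fun j hj => by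
      simpa using (monotone_sort f (Finset.mem_Iic.mp hj)).trans_lt hlt
  have hle := Finset.card_le_card_of_injOn _ hmaps (sort f).injective.injOn
  rw [Fin.card_Iic] at hle
  omega

end OrderStatistics

theorem monotone_trunc (M : ℝ) : Monotone (trunc M) :=
  fun _ _ h => max_le_max le_rfl (min_le_min le_rfl h)

theorem trunc_eq_self_s14 {M y : ℝ} (hy : |y| ≤ M) : trunc M y = y := by
  rw [trunc, min_eq_right (abs_le.mp hy).2, max_eq_right (abs_le.mp hy).1]

theorem trimmedMean_comp_of_monotone {𝕏 : Type*} {n : ℕ} (k : ℕ)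
    (f : 𝕏 → ℝ) (x : Fin n → 𝕏) {φ : ℝ → ℝ} (hφ : Monotone φ)
    (hfix : ∀ i : Fin n, k ≤ (i : ℕ) → (i : ℕ) < n - k →
      φ (f (x (Tuple.sort (f ∘ x) i))) = f (x (Tuple.sort (f ∘ x) i))) :
    trimmedMean k (φ ∘ f) x = trimmedMean k f x := by
  have hsort := Tuple.comp_sort_comp_of_monotone hφ (f ∘ x)
  unfold trimmedMean
  congr 1
  refine Finset.sum_congr rfl fun i hi => ?_
  rw [Finset.mem_filter] at hi
  exact (congrFun hsort i).trans (hfix i hi.2.1 hi.2.2)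

theorem trimmedMean_trunc_eq_general
    {𝕏 : Type*} (n : ℕ) (x : Fin n → 𝕏) (g : 𝕏 → ℝ) (M : ℝ) (k : ℕ)
    (hcount : (Finset.univ.filter fun i : Fin n => M < |g (x i)|).card ≤ k) :
    trimmedMean k g x = trimmedMean k (fun z => trunc M (g z)) x := by
  have hbig : (Finset.univ.filter fun i : Fin n => M < g (x i)).card ≤ k :=
    (Finset.card_le_card (Finset.monotone_filter_right _
      fun i _ (h : M < g (x i)) => h.trans_le (le_abs_self _))).trans hcount
  have hsmall : (Finset.univ.filter fun i : Fin n => g (x i) < -M).card ≤ k :=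
    (Finset.card_le_card (Finset.monotone_filter_right _
      fun i _ (h : g (x i) < -M) => (lt_neg.mp h).trans_le (neg_le_abs _))).trans hcount
  refine (trimmedMean_comp_of_monotone k g x (monotone_trunc M) fun i hki hin => ?_).symm
  exact trunc_eq_self_s14 (abs_le.mpr
    ⟨Tuple.le_comp_sort_of_card_le hsmall hki, Tuple.comp_sort_le_of_card_le hbig hin⟩)

/-- the trimmed mean is unchanged by truncation when few values are large. -/
theorem trimmedMean_trunc_eq
    {𝕏 : Type*} (n : ℕ) (x : Fin n → 𝕏) (g : 𝕏 → ℝ) (M : ℝ) (hM : 0 < M)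
    (k : ℕ) (hk1 : 1 ≤ k) (hk2 : 2 * k < n)
    (hcount : (Finset.univ.filter fun i : Fin n => M < |g (x i)|).card ≤ k) :
    trimmedMean k g x = trimmedMean k (fun z => trunc M (g z)) x :=
  trimmedMean_trunc_eq_general n x g M k hcount

end Paper
end
end
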